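/- The truncated AoII Markov chain is irreducible: for every state s ∈ S there exists n ∈ ℕ with (Pⁿ)((0,0), s) > 0, and there exists m ∈ ℕ with (Pᵐ)(s, (0,0)) > 0. (Here Pⁿ denotes the n-th matrix power of the transition matrix P.) -/

import Mathlib

/-- State space of the truncated AoII Markov chain:
`S = {(0,0)} ∪ {(f,g) : 1 ≤ f ≤ F, 1 ≤ g ≤ min f G}`. -/
def aoiiStates (F G : ℕ) : Finset (ℕ × ℕ) :=
  (Finset.range (F + 1) ×ˢ Finset.range (G + 1)).filter
    (fun s => s = (0, 0) ∨ (1 ≤ s.1 ∧ s.1 ≤ F ∧ 1 ≤ s.2 ∧ s.2 ≤ min s.1 G))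

/-- Transition matrix of the truncated AoII Markov chain, with `p_r = 1 - 2 p_t`
and truncation `[x]_T = min x T`; probabilities of coinciding target states
are added. -/
noncomputable def aoiiP (F G : ℕ) (pt : ℝ) (q : ℕ × ℕ → ℝ) (s s' : ℕ × ℕ) : ℝ :=
  if s = (0, 0) then
    (if s' = (1, 1) then 2 * pt else 0) +
    (if s' = (0, 0) then 1 - 2 * pt else 0)
  else if s.2 = 1 then
    (if s' = (min (s.1 + 1) F, 2) then pt * (1 - q s) else 0) +
    (if s' = (min (s.1 + 1) F, 1) then (1 - 2 * pt) * (1 - q s) else 0) +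
    (if s' = (0, 0) then pt + (1 - pt) * q s else 0)
  else
    (if s' = (min (s.1 + 1) F, min (s.2 + 1) G) then pt * (1 - q s) else 0) +
    (if s' = (min (s.1 + 1) F, s.2 - 1) then pt * (1 - q s) else 0) +
    (if s' = (min (s.1 + 1) F, s.2) then (1 - 2 * pt) * (1 - q s) else 0) +
    (if s' = (0, 0) then q s else 0)

/-- `n`-step transition probabilities (the `n`-th matrix power of `aoiiP`,
with the matrix indexed by the finite state space `aoiiStates F G`). -/
noncomputable def aoiiPn (F G : ℕ) (pt : ℝ) (q : ℕ × ℕ → ℝ) :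
    ℕ → ℕ × ℕ → ℕ × ℕ → ℝ
  | 0, s, s' => if s = s' then 1 else 0
  | n + 1, s, s' => ∑ u ∈ aoiiStates F G, aoiiPn F G pt q n s u * aoiiP F G pt q u s'

section Aux

variable {F G : ℕ} {pt : ℝ} {q : ℕ × ℕ → ℝ}

lemma aoii_mem {f g : ℕ}
    (h : (f = 0 ∧ g = 0) ∨ (1 ≤ f ∧ f ≤ F ∧ 1 ≤ g ∧ g ≤ min f G)) :
    (f, g) ∈ aoiiStates F G := by
  simp only [aoiiStates, Finset.mem_filter, Finset.mem_product, Finset.mem_range,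
    Prod.mk.injEq]
  omega

lemma aoiiP_nonneg (hpt0 : 0 < pt) (hpt : pt < 1 / 2) {u : ℕ × ℕ}
    (h0 : 0 ≤ q u) (h1 : q u ≤ 1) (s' : ℕ × ℕ) : 0 ≤ aoiiP F G pt q u s' := by
  unfold aoiiP
  split_ifs <;> nlinarith

lemma aoiiPn_nonneg (hpt0 : 0 < pt) (hpt : pt < 1 / 2)
    (hq : ∀ s ∈ aoiiStates F G, 0 ≤ q s ∧ q s < 1) :
    ∀ n s s', 0 ≤ aoiiPn F G pt q n s s' := by
  intro n
  induction n with
  | zero =>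
    intro s s'
    simp only [aoiiPn]
    split_ifs <;> norm_num
  | succ n ih =>
    intro s s'
    rw [aoiiPn]
    exact Finset.sum_nonneg fun u hu =>
      mul_nonneg (ih s u)
        (aoiiP_nonneg hpt0 hpt (hq u hu).1 (hq u hu).2.le s')

lemma aoii_step (hpt0 : 0 < pt) (hpt : pt < 1 / 2)
    (hq : ∀ s ∈ aoiiStates F G, 0 ≤ q s ∧ q s < 1)
    {n : ℕ} {s u s' : ℕ × ℕ} (hu : u ∈ aoiiStates F G)
    (h1 : 0 < aoiiPn F G pt q n s u) (h2 : 0 < aoiiP F G pt q u s') :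
    0 < aoiiPn F G pt q (n + 1) s s' := by
  rw [aoiiPn]
  refine Finset.sum_pos'
    (fun v hv => mul_nonneg (aoiiPn_nonneg hpt0 hpt hq n s v)
      (aoiiP_nonneg hpt0 hpt (hq v hv).1 (hq v hv).2.le s'))
    ⟨u, hu, mul_pos h1 h2⟩

-- transition positivity lemmas

lemma T0 (hpt0 : 0 < pt) : 0 < aoiiP F G pt q (0, 0) (1, 1) := by
  simp only [aoiiP, if_pos rfl, Prod.mk.injEq]
  norm_num
  linarith

lemma T1 (hpt0 : 0 < pt) (hpt : pt < 1 / 2) {f : ℕ} (hf : f + 1 ≤ F)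
    (h1 : q (f, 1) < 1) : 0 < aoiiP F G pt q (f, 1) (f + 1, 1) := by
  have hmin : min (f + 1) F = f + 1 := Nat.min_eq_left hf
  simp only [aoiiP, hmin, Prod.mk.injEq]
  norm_num
  nlinarith

lemma T2 (hpt0 : 0 < pt) {f : ℕ} (hf : f + 1 ≤ F)
    (h1 : q (f, 1) < 1) : 0 < aoiiP F G pt q (f, 1) (f + 1, 2) := by
  have hmin : min (f + 1) F = f + 1 := Nat.min_eq_left hf
  simp only [aoiiP, hmin, Prod.mk.injEq]
  norm_num
  nlinarith

lemma T5 (hpt0 : 0 < pt) (hpt : pt < 1 / 2) {f : ℕ}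
    (h0 : 0 ≤ q (f, 1)) : 0 < aoiiP F G pt q (f, 1) (0, 0) := by
  simp only [aoiiP, Prod.mk.injEq]
  norm_num
  nlinarith

lemma T4 (hpt0 : 0 < pt) {f g : ℕ} (hg2 : 2 ≤ g) (hgG : g + 1 ≤ G)
    (hf : f + 1 ≤ F) (h1 : q (f, g) < 1) :
    0 < aoiiP F G pt q (f, g) (f + 1, g + 1) := by
  have hminF : min (f + 1) F = f + 1 := Nat.min_eq_left hf
  have hminG : min (g + 1) G = g + 1 := Nat.min_eq_left hgG
  have hne : (f, g) ≠ (0, 0) := by simp [Prod.ext_iff]; omega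
  have hne2 : g ≠ 1 := by omega
  simp only [aoiiP, if_neg hne, hminF, hminG, Prod.mk.injEq]
  split_ifs <;> first | (exfalso; omega) | nlinarith | simp_all

lemma T3 (hpt0 : 0 < pt) {f g : ℕ} (hg2 : 2 ≤ g) (hgG : g ≤ G) (hF : 1 ≤ F)
    (h1 : q (f, g) < 1) :
    0 < aoiiP F G pt q (f, g) (min (f + 1) F, g - 1) := by
  have hne : (f, g) ≠ (0, 0) := by simp [Prod.ext_iff]; omega
  simp only [aoiiP, if_neg hne, Prod.mk.injEq]
  split_ifs <;> first | (exfalso; omega) | nlinarith | simp_all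

end Aux

/-- The truncated AoII Markov chain is irreducible: every state is reachable
from `(0,0)` in some number of steps with positive probability, and `(0,0)` is
reachable from every state. -/
theorem aoii_irreducible (F G : ℕ) (hGF : G ≤ F) (hG : 2 ≤ G)
    (pt : ℝ) (hpt0 : 0 < pt) (hpt : pt < 1 / 2)
    (q : ℕ × ℕ → ℝ) (hq : ∀ s ∈ aoiiStates F G, 0 ≤ q s ∧ q s < 1)
    (hq0 : q (0, 0) = 0) :
    ∀ s ∈ aoiiStates F G,
      (∃ n : ℕ, 0 < aoiiPn F G pt q n (0, 0) s) ∧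
      (∃ m : ℕ, 0 < aoiiPn F G pt q m s (0, 0)) := by
  have hF : 1 ≤ F := le_trans (by omega) hGF
  have h00 : (0, 0) ∈ aoiiStates F G := aoii_mem (Or.inl ⟨rfl, rfl⟩)
  have hPn0 : 0 < aoiiPn F G pt q 0 (0, 0) (0, 0) := by
    simp [aoiiPn]
  -- forward reachability
  have fwd : ∀ f g : ℕ, 1 ≤ g → g ≤ f → g ≤ G → f ≤ F →
      0 < aoiiPn F G pt q f (0, 0) (f, g) := by
    intro f
    induction f with
    | zero => intro g h1 h2 _ _; omega
    | succ f ih =>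
      intro g h1 h2 h3 h4
      rcases eq_or_lt_of_le h1 with hg1 | hg2
      · -- g = 1
        subst hg1
        rcases Nat.eq_zero_or_pos f with hf0 | hf1
        · subst hf0
          exact aoii_step hpt0 hpt hq h00 hPn0 (T0 hpt0)
        · have hmem : (f, 1) ∈ aoiiStates F G :=
            aoii_mem (Or.inr (by omega))
          exact aoii_step hpt0 hpt hq hmem
            (ih 1 le_rfl hf1 (by omega) (by omega))
            (T1 hpt0 hpt h4 (hq _ hmem).2)
      · -- 2 ≤ g
        have hmem : (f, g - 1) ∈ aoiiStates F G :=
          aoii_mem (Or.inr (by omega))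
        have hprev : 0 < aoiiPn F G pt q f (0, 0) (f, g - 1) :=
          ih (g - 1) (by omega) (by omega) (by omega) (by omega)
        rcases eq_or_lt_of_le (Nat.succ_le_of_lt hg2) with hg2' | hg3
        · -- g = 2
          have hgg : g = 2 := by omega
          have h2' : (f + 1, g) = (f + 1, 2) := by rw [hgg]
          rw [h2']
          have hmem' : (f, 1) ∈ aoiiStates F G := aoii_mem (Or.inr (by omega))
          have hprev' : 0 < aoiiPn F G pt q f (0, 0) (f, 1) :=
            ih 1 le_rfl (by omega) (by omega) (by omega)
          exact aoii_step hpt0 hpt hq hmem' hprev' (T2 hpt0 h4 (hq _ hmem').2)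
        · -- 3 ≤ g
          have hstep : 0 < aoiiP F G pt q (f, g - 1) (f + 1, (g - 1) + 1) :=
            T4 hpt0 (by omega) (by omega) h4 (hq _ hmem).2
          have hE : (f + 1, (g - 1) + 1) = (f + 1, g) := by
            simp [Prod.ext_iff]; omega
          rw [hE] at hstep
          exact aoii_step hpt0 hpt hq hmem hprev hstep
  -- backward: the descending path
  have down : ∀ i f g : ℕ, 1 ≤ g → g ≤ f → g ≤ G → f ≤ F → i < g →
      0 < aoiiPn F G pt q i (f, g) (min (f + i) F, g - i) := by
    intro i
    induction i with
    | zero =>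
      intro f g h1 h2 h3 h4 h5
      have : min (f + 0) F = f := by omega
      rw [this]
      simp [aoiiPn]
    | succ i ih =>
      intro f g h1 h2 h3 h4 h5
      have hmem : (min (f + i) F, g - i) ∈ aoiiStates F G :=
        aoii_mem (Or.inr (by omega))
      have hstep : 0 < aoiiP F G pt q (min (f + i) F, g - i)
          (min (min (f + i) F + 1) F, (g - i) - 1) :=
        T3 hpt0 (by omega) (by omega) hF (hq _ hmem).2
      have hE : (min (min (f + i) F + 1) F, (g - i) - 1)
          = (min (f + (i + 1)) F, g - (i + 1)) := by
        simp [Prod.ext_iff]; omega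
      rw [hE] at hstep
      exact aoii_step hpt0 hpt hq hmem
        (ih f g h1 h2 h3 h4 (by omega)) hstep
  have bwd : ∀ f g : ℕ, 1 ≤ g → g ≤ f → g ≤ G → f ≤ F →
      0 < aoiiPn F G pt q g (f, g) (0, 0) := by
    intro f g h1 h2 h3 h4
    have hpath : 0 < aoiiPn F G pt q (g - 1) (f, g) (min (f + (g - 1)) F, g - (g - 1)) :=
      down (g - 1) f g h1 h2 h3 h4 (by omega)
    have hE : g - (g - 1) = 1 := by omega
    rw [hE] at hpath
    have hmem : (min (f + (g - 1)) F, 1) ∈ aoiiStates F G :=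
      aoii_mem (Or.inr (by omega))
    have := aoii_step hpt0 hpt hq hmem hpath (T5 hpt0 hpt (hq _ hmem).1)
    rwa [show g - 1 + 1 = g from by omega] at this
  -- conclude
  intro s hs
  have hs' := hs
  simp only [aoiiStates, Finset.mem_filter, Finset.mem_product, Finset.mem_range,
    Prod.mk.injEq] at hs'
  rcases hs'.2 with h0 | hcond
  · constructor
    · exact ⟨0, by rw [show s = (0, 0) from h0]; exact hPn0⟩
    · exact ⟨0, by rw [show s = (0, 0) from h0]; exact hPn0⟩
  · obtain ⟨f, g⟩ := s
    refine ⟨⟨f, fwd f g ?_ ?_ ?_ ?_⟩, ⟨g, bwd f g ?_ ?_ ?_ ?_⟩⟩ <;>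
      · simp only at hcond; omega
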